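/- Let (L, [·,·], α) be a multiplicative Hom-Lie superalgebra and let r = Σ r₁⊗r₂ ∈ L⊗L be an even element (|r₁| = |r₂| for each summand) with α^{⊗2}(r) = r. Then Δ = ad(r) : L → L⊗L, Δ(x) = ad_x(r), satisfies the 1-cocycle (compatibility) condition: ad_{[x,y]}(r) = ad_{α(x)}(ad_y(r)) − (−1)^{|x||y|} ad_{α(y)}(ad_x(r)) for all homogeneous x, y ∈ L. -/

import Mathlib

open TensorProduct

variable (K : Type*) [Field K] [CharZero K]

/-- The super sign `(-1)^{p·q}` for parities `p q : ZMod 2`. -/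
def eps (p q : ZMod 2) : K := (-1 : K) ^ (p.val * q.val)

variable {K}

section Defs

variable {L M : Type*} [AddCommGroup L] [Module K L] [AddCommGroup M] [Module K M]

/-- `x` is homogeneous of parity `p` with respect to the grading involution `σ`
(`σ` acts as `(-1)^i` on the degree-`i` part of the `ℤ₂`-graded space). -/
def IsHomog (σ : L →ₗ[K] L) (p : ZMod 2) (x : L) : Prop :=
  σ x = ((-1 : K) ^ p.val) • x

/-- The operator multiplying a homogeneous element of parity `q` by `(-1)^{p·q}`. -/
noncomputable def signPow (σ : L →ₗ[K] L) (p : ZMod 2) : L →ₗ[K] L :=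
  ((2 : K)⁻¹ * (1 + (-1 : K) ^ p.val)) • (LinearMap.id : L →ₗ[K] L)
    + ((2 : K)⁻¹ * (1 - (-1 : K) ^ p.val)) • σ

/-- The operator multiplying `x ⊗ y` (with `x, y` homogeneous of parities `p, q`)
by the Koszul sign `(-1)^{p·q}`. -/
noncomputable def signOp (σL : L →ₗ[K] L) (σM : M →ₗ[K] M) :
    L ⊗[K] M →ₗ[K] L ⊗[K] M :=
  (2 : K)⁻¹ • ((LinearMap.id : L ⊗[K] M →ₗ[K] L ⊗[K] M)
    + TensorProduct.map σL LinearMap.id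
    + TensorProduct.map LinearMap.id σM
    - TensorProduct.map σL σM)

/-- The super twist `τ(x ⊗ y) = (-1)^{|x||y|} y ⊗ x`. -/
noncomputable def superTwist (σ : L →ₗ[K] L) : L ⊗[K] L →ₗ[K] L ⊗[K] L :=
  (TensorProduct.comm K L L).toLinearMap ∘ₗ signOp σ σ

/-- The super cyclic map `ξ(x ⊗ y ⊗ z) = (-1)^{|x|(|y|+|z|)} y ⊗ z ⊗ x`. -/
noncomputable def superCyclic (σ : L →ₗ[K] L) :
    L ⊗[K] (L ⊗[K] L) →ₗ[K] L ⊗[K] (L ⊗[K] L) :=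
  (TensorProduct.assoc K L L L).toLinearMap
    ∘ₗ (TensorProduct.comm K L (L ⊗[K] L)).toLinearMap
    ∘ₗ signOp σ (TensorProduct.map σ σ)

/-- The adjoint action `ad_x` on `L ⊗ L`, for `x` homogeneous of parity `p`:
`ad_x(y₁ ⊗ y₂) = [x,y₁] ⊗ α(y₂) + (-1)^{|x||y₁|} α(y₁) ⊗ [x,y₂]`. -/
noncomputable def adT (σ : L →ₗ[K] L) (br : L →ₗ[K] L →ₗ[K] L) (α : L →ₗ[K] L)
    (p : ZMod 2) (x : L) : L ⊗[K] L →ₗ[K] L ⊗[K] L :=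
  TensorProduct.map (br x) α + TensorProduct.map (α ∘ₗ signPow σ p) (br x)

/-- The adjoint action `ad_x` on `L ⊗ (L ⊗ L)`, for `x` homogeneous of parity `p`. -/
noncomputable def adT3 (σ : L →ₗ[K] L) (br : L →ₗ[K] L →ₗ[K] L) (α : L →ₗ[K] L)
    (p : ZMod 2) (x : L) :
    L ⊗[K] (L ⊗[K] L) →ₗ[K] L ⊗[K] (L ⊗[K] L) :=
  TensorProduct.map (br x) (TensorProduct.map α α)
    + TensorProduct.map (α ∘ₗ signPow σ p) (TensorProduct.map (br x) α)
    + TensorProduct.map (α ∘ₗ signPow σ p)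
        (TensorProduct.map (α ∘ₗ signPow σ p) (br x))

/-- A Hom-Lie superalgebra `(L, [·,·], α)` with grading involution `σ`:
the bracket and `α` are even, the bracket is skew-supersymmetric and
satisfies the Hom-super-Jacobi identity. -/
def IsHomLieSuperalgebra (σ : L →ₗ[K] L) (br : L →ₗ[K] L →ₗ[K] L) (α : L →ₗ[K] L) : Prop :=
  σ ∘ₗ σ = LinearMap.id
  ∧ (∀ x y, σ (br x y) = br (σ x) (σ y))
  ∧ (∀ x, σ (α x) = α (σ x))
  ∧ (∀ p q x y, IsHomog σ p x → IsHomog σ q y → br x y = -(eps K p q) • br y x)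
  ∧ (∀ p q r x y z, IsHomog σ p x → IsHomog σ q y → IsHomog σ r z →
      eps K p r • br (α x) (br y z) + eps K r q • br (α z) (br x y)
        + eps K q p • br (α y) (br z x) = 0)

/-- Multiplicativity: `α([x,y]) = [α(x), α(y)]`. -/
def IsMultiplicative (br : L →ₗ[K] L →ₗ[K] L) (α : L →ₗ[K] L) : Prop :=
  ∀ x y, α (br x y) = br (α x) (α y)

/-- A Hom-Lie supercoalgebra `(L, Δ, α)` with grading involution `σ`. -/
def IsHomLieSupercoalgebra (σ α : L →ₗ[K] L) (Δ : L →ₗ[K] L ⊗[K] L) : Prop :=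
  σ ∘ₗ σ = LinearMap.id
  ∧ (∀ x, σ (α x) = α (σ x))
  ∧ TensorProduct.map σ σ ∘ₗ Δ = Δ ∘ₗ σ
  ∧ (∀ x, ∃ u, Δ x = u - superTwist σ u)
  ∧ (LinearMap.id + superCyclic σ + superCyclic σ ∘ₗ superCyclic σ)
      ∘ₗ TensorProduct.map α Δ ∘ₗ Δ = 0

/-- Co-multiplicativity: `Δ ∘ α = α^{⊗2} ∘ Δ`. -/
def IsComultiplicative (α : L →ₗ[K] L) (Δ : L →ₗ[K] L ⊗[K] L) : Prop :=
  Δ ∘ₗ α = TensorProduct.map α α ∘ₗ Δ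

/-- A Hom-Lie superbialgebra `(L, [·,·], Δ, α)`. -/
def IsHomLieSuperbialgebra (σ : L →ₗ[K] L) (br : L →ₗ[K] L →ₗ[K] L) (α : L →ₗ[K] L)
    (Δ : L →ₗ[K] L ⊗[K] L) : Prop :=
  IsHomLieSuperalgebra σ br α
  ∧ IsHomLieSupercoalgebra σ α Δ
  ∧ ∀ p q x y, IsHomog σ p x → IsHomog σ q y →
      Δ (br x y) = adT σ br α p (α x) (Δ y) - eps K p q • adT σ br α q (α y) (Δ x)

/-- A multiplicative Hom-Lie superbialgebra. -/
def IsMultHomLieSuperbialgebra (σ : L →ₗ[K] L) (br : L →ₗ[K] L →ₗ[K] L) (α : L →ₗ[K] L)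
    (Δ : L →ₗ[K] L ⊗[K] L) : Prop :=
  IsHomLieSuperbialgebra σ br α Δ ∧ IsMultiplicative br α ∧ IsComultiplicative α Δ

/-- An admissible Hom-Lie superalgebra: `[(Id - α²)(x), α(y)] = 0`. -/
def IsAdmissible (σ : L →ₗ[K] L) (br : L →ₗ[K] L →ₗ[K] L) (α : L →ₗ[K] L) : Prop :=
  IsHomLieSuperalgebra σ br α ∧ ∀ x y, br (x - α (α x)) (α y) = 0

/-- A morphism of Hom-Lie superbialgebras: an even linear map commuting with the
twist maps, the brackets and the cobrackets. -/
def IsBialgMorphism {L₂ : Type*} [AddCommGroup L₂] [Module K L₂]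
    (σ₁ : L →ₗ[K] L) (br₁ : L →ₗ[K] L →ₗ[K] L) (α₁ : L →ₗ[K] L) (Δ₁ : L →ₗ[K] L ⊗[K] L)
    (σ₂ : L₂ →ₗ[K] L₂) (br₂ : L₂ →ₗ[K] L₂ →ₗ[K] L₂) (α₂ : L₂ →ₗ[K] L₂)
    (Δ₂ : L₂ →ₗ[K] L₂ ⊗[K] L₂) (f : L →ₗ[K] L₂) : Prop :=
  (∀ x, σ₂ (f x) = f (σ₁ x)) ∧ (∀ x, α₂ (f x) = f (α₁ x))
  ∧ (∀ x y, f (br₁ x y) = br₂ (f x) (f y))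
  ∧ TensorProduct.map f f ∘ₗ Δ₁ = Δ₂ ∘ₗ f

/-- A representation `ρ` of the Hom-Lie superalgebra `(L, br, αg)` on `(M, σM)`
with respect to `A`. -/
def IsRepresentation (σg : L →ₗ[K] L) (br : L →ₗ[K] L →ₗ[K] L) (αg : L →ₗ[K] L)
    (σM A : M →ₗ[K] M) (ρ : L →ₗ[K] M →ₗ[K] M) : Prop :=
  (∀ x v, σM (ρ x v) = ρ (σg x) (σM v))
  ∧ (∀ x, ρ (αg x) ∘ₗ A = A ∘ₗ ρ x)
  ∧ (∀ p q x y, IsHomog σg p x → IsHomog σg q y →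
      ρ (br x y) ∘ₗ A = ρ (αg x) ∘ₗ ρ y - eps K p q • (ρ (αg y) ∘ₗ ρ x))

/-- The signed middle-four interchange
`(r₁ ⊗ r₂) ⊗ (r₁' ⊗ r₂') ↦ (-1)^{|r₂||r₁'|} (r₁ ⊗ r₁') ⊗ (r₂ ⊗ r₂')`. -/
noncomputable def signedMidSwap (σ : L →ₗ[K] L) :
    (L ⊗[K] L) ⊗[K] (L ⊗[K] L) →ₗ[K] (L ⊗[K] L) ⊗[K] (L ⊗[K] L) :=
  (TensorProduct.assoc K (L ⊗[K] L) L L).toLinearMap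
    ∘ₗ TensorProduct.map (TensorProduct.assoc K L L L).symm.toLinearMap LinearMap.id
    ∘ₗ TensorProduct.map (TensorProduct.map LinearMap.id (superTwist σ)) LinearMap.id
    ∘ₗ TensorProduct.map (TensorProduct.assoc K L L L).toLinearMap LinearMap.id
    ∘ₗ (TensorProduct.assoc K (L ⊗[K] L) L L).symm.toLinearMap

/-- `[r₁₂, r'₁₃] = Σ (-1)^{|r'₁||r₂|} [r₁,r'₁] ⊗ α(r₂) ⊗ α(r'₂)`. -/
noncomputable def br1213 (σ : L →ₗ[K] L) (br : L →ₗ[K] L →ₗ[K] L) (α : L →ₗ[K] L)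
    (r r' : L ⊗[K] L) : L ⊗[K] (L ⊗[K] L) :=
  TensorProduct.map (TensorProduct.lift br) (TensorProduct.map α α)
    (signedMidSwap σ (r ⊗ₜ[K] r'))

/-- `[r₁₂, r'₂₃] = Σ α(r₁) ⊗ [r₂,r'₁] ⊗ α(r'₂)`. -/
noncomputable def br1223 (br : L →ₗ[K] L →ₗ[K] L) (α : L →ₗ[K] L)
    (r r' : L ⊗[K] L) : L ⊗[K] (L ⊗[K] L) :=
  TensorProduct.map α
      (TensorProduct.map (TensorProduct.lift br) α
        ∘ₗ (TensorProduct.assoc K L L L).symm.toLinearMap)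
    ((TensorProduct.assoc K L L (L ⊗[K] L)).toLinearMap (r ⊗ₜ[K] r'))

/-- `[r₁₃, r'₂₃] = Σ (-1)^{|r'₁||r₂|} α(r₁) ⊗ α(r'₁) ⊗ [r₂,r'₂]`. -/
noncomputable def br1323 (σ : L →ₗ[K] L) (br : L →ₗ[K] L →ₗ[K] L) (α : L →ₗ[K] L)
    (r r' : L ⊗[K] L) : L ⊗[K] (L ⊗[K] L) :=
  (TensorProduct.assoc K L L L).toLinearMap
    (TensorProduct.map (TensorProduct.map α α) (TensorProduct.lift br)
      (signedMidSwap σ (r ⊗ₜ[K] r')))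

/-- The left-hand side `[[r,r]]^α` of the classical Hom-Yang-Baxter equation. -/
noncomputable def chybeEl (σ : L →ₗ[K] L) (br : L →ₗ[K] L →ₗ[K] L) (α : L →ₗ[K] L)
    (r : L ⊗[K] L) : L ⊗[K] (L ⊗[K] L) :=
  br1213 σ br α r r + br1223 br α r r + br1323 σ br α r r

/-- A coboundary Hom-Lie superbialgebra. -/
def IsCoboundary (σ : L →ₗ[K] L) (br : L →ₗ[K] L →ₗ[K] L) (α : L →ₗ[K] L)
    (Δ : L →ₗ[K] L ⊗[K] L) (r : L ⊗[K] L) : Prop :=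
  IsHomLieSuperbialgebra σ br α Δ
  ∧ TensorProduct.map α α r = r
  ∧ ∀ p x, IsHomog σ p x → Δ x = adT σ br α p x r

/-- A quasi-triangular Hom-Lie superbialgebra: a coboundary one where `r`
satisfies the classical Hom-Yang-Baxter equation. -/
def IsQuasiTriangular (σ : L →ₗ[K] L) (br : L →ₗ[K] L →ₗ[K] L) (α : L →ₗ[K] L)
    (Δ : L →ₗ[K] L ⊗[K] L) (r : L ⊗[K] L) : Prop :=
  IsCoboundary σ br α Δ r ∧ chybeEl σ br α r = 0

/-- The global linear map `x ↦ ad_x(r) = Σ [x,r₁] ⊗ α(r₂) + (-1)^{|x||r₁|} α(r₁) ⊗ [x,r₂]`. -/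
noncomputable def adMap (σ : L →ₗ[K] L) (br : L →ₗ[K] L →ₗ[K] L) (α : L →ₗ[K] L)
    (r : L ⊗[K] L) : L →ₗ[K] L ⊗[K] L :=
  (TensorProduct.map (TensorProduct.lift br) α
      ∘ₗ (TensorProduct.assoc K L L L).symm.toLinearMap
    + TensorProduct.map α (TensorProduct.lift br)
        ∘ₗ (TensorProduct.assoc K L L L).toLinearMap
        ∘ₗ TensorProduct.map (superTwist σ) LinearMap.id
        ∘ₗ (TensorProduct.assoc K L L L).symm.toLinearMap)
  ∘ₗ (TensorProduct.mk K L (L ⊗[K] L)).flip r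

end Defs

/-! `ad` is the diagonal action of `L` on `L ⊗ L`. Writing the Hom-super-Jacobi identity in
Leibniz form `[[x,y],α z] = [α x,[y,z]] - ε(x,y) [α y,[x,z]]` and using multiplicativity, one checks
on pure tensors that `ad_{[x,y]} ∘ α^{⊗2} = ad_{α x} ∘ ad_y - ε(x,y) ad_{α y} ∘ ad_x` on all of
`L ⊗ L`; evaluating at `r = α^{⊗2}(r)` gives the cocycle condition. The signs work out because
`ε` is a symmetric bicharacter on `ZMod 2` with `ε² = 1`, and since `2` is invertible every element
splits into homogeneous parts, so it suffices to check homogeneous elements. -/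

section Signs

variable (K : Type*) [Field K]

lemma eps_add_left (p q m : ZMod 2) : eps K (p + q) m = eps K p m * eps K q m := by
  rw [eps, eps, eps, ← pow_add, ← add_mul, ZMod.val_add, neg_one_pow_eq_pow_mod_two,
    Nat.mod_mul_mod, ← neg_one_pow_eq_pow_mod_two]

lemma eps_comm (p q : ZMod 2) : eps K p q = eps K q p := by
  rw [eps, eps, Nat.mul_comm]

lemma eps_add_right (p q m : ZMod 2) : eps K p (q + m) = eps K p q * eps K p m := by
  rw [eps_comm, eps_add_left, eps_comm K q, eps_comm K m]

lemma eps_mul_self (p q : ZMod 2) : eps K p q * eps K p q = 1 := by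
  rw [eps, ← pow_add, ← two_mul, pow_mul, neg_one_sq, one_pow]

end Signs

section Homogeneous

variable {K L : Type*} [Field K] [AddCommGroup L] [Module K L] {σ : L →ₗ[K] L}

lemma IsHomog.map {f : L →ₗ[K] L} {m : ZMod 2} {a : L} (hf : ∀ z, σ (f z) = f (σ z))
    (ha : IsHomog σ m a) : IsHomog σ m (f a) := by
  rw [IsHomog, hf, ha, map_smul]

lemma IsHomog.br {br : L →ₗ[K] L →ₗ[K] L} {p m : ZMod 2} {x a : L}
    (hbr : ∀ u v, σ (br u v) = br (σ u) (σ v)) (hx : IsHomog σ p x) (ha : IsHomog σ m a) :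
    IsHomog σ (p + m) (br x a) := by
  rw [IsHomog, hbr, hx, ha, map_smul, map_smul, LinearMap.smul_apply, smul_smul, ← pow_add,
    add_comm m.val, ZMod.val_add, ← neg_one_pow_eq_pow_mod_two]

lemma IsHomLieSuperalgebra.br_br_alpha_of_isHomog {br : L →ₗ[K] L →ₗ[K] L} {α : L →ₗ[K] L}
    (h : IsHomLieSuperalgebra σ br α) {p q s : ZMod 2} {x y z : L}
    (hx : IsHomog σ p x) (hy : IsHomog σ q y) (hz : IsHomog σ s z) :
    br (br x y) (α z) = br (α x) (br y z) - eps K p q • br (α y) (br x z) := by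
  obtain ⟨-, hσbr, hσα, hskew, hjac⟩ := h
  have hxyz := hjac p q s x y z hx hy hz
  rw [hskew s p z x hz hx, neg_smul, map_neg, map_smul, eps_comm K s q, eps_comm K q p,
    eps_comm K s p] at hxyz
  rw [hskew (p + q) s _ _ (hx.br hσbr hy) (hz.map hσα), eps_add_left]
  linear_combination (norm := module) -eps K p s • hxyz
    + eps_mul_self K p s • (br (α x) (br y z) - eps K p q • br (α y) (br x z))

end Homogeneous

section AdjointAction

variable {L : Type*} [AddCommGroup L] [Module K L]
  {σ : L →ₗ[K] L} {br : L →ₗ[K] L →ₗ[K] L} {α : L →ₗ[K] L}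

lemma signPow_apply_of_isHomog {m : ZMod 2} {u : L} (p : ZMod 2) (hu : IsHomog σ m u) :
    signPow σ p u = eps K p m • u := by
  rw [signPow, LinearMap.add_apply, LinearMap.smul_apply, LinearMap.smul_apply,
    LinearMap.id_apply, hu, smul_smul, ← add_smul]
  congr 1
  have hp := ZMod.val_lt p
  have hm := ZMod.val_lt m
  rw [eps]
  interval_cases p.val <;> interval_cases m.val <;> norm_num

lemma exists_isHomog_add (hσ : σ ∘ₗ σ = LinearMap.id) (a : L) :
    ∃ a₀ a₁, IsHomog σ 0 a₀ ∧ IsHomog σ 1 a₁ ∧ a = a₀ + a₁ := by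
  have hσσ : σ (σ a) = a := LinearMap.congr_fun hσ a
  refine ⟨(2 : K)⁻¹ • (a + σ a), (2 : K)⁻¹ • (a - σ a), ?_, ?_, ?_⟩
  · rw [IsHomog, map_smul, map_add, hσσ, ZMod.val_zero, pow_zero, one_smul, add_comm]
  · rw [IsHomog, map_smul, map_sub, hσσ, ZMod.val_one, pow_one]
    module
  · module

lemma IsHomLieSuperalgebra.br_br_alpha (h : IsHomLieSuperalgebra σ br α) {p q : ZMod 2}
    {x y : L} (hx : IsHomog σ p x) (hy : IsHomog σ q y) (z : L) :
    br (br x y) (α z) = br (α x) (br y z) - eps K p q • br (α y) (br x z) := by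
  obtain ⟨z₀, z₁, hz₀, hz₁, rfl⟩ := exists_isHomog_add h.1 z
  simp only [map_add, h.br_br_alpha_of_isHomog hx hy hz₀, h.br_br_alpha_of_isHomog hx hy hz₁]
  module

lemma adT_tmul_of_isHomog {m : ZMod 2} {u : L} (p : ZMod 2) (x v : L) (hu : IsHomog σ m u) :
    adT σ br α p x (u ⊗ₜ[K] v) = br x u ⊗ₜ[K] α v + eps K p m • (α u ⊗ₜ[K] br x v) := by
  rw [adT, LinearMap.add_apply, map_tmul, map_tmul, LinearMap.comp_apply,
    signPow_apply_of_isHomog p hu, map_smul, smul_tmul']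

lemma IsHomLieSuperalgebra.adT_br_map_tmul (h : IsHomLieSuperalgebra σ br α)
    (hmult : IsMultiplicative br α) {p q m : ZMod 2} {x y a : L}
    (hx : IsHomog σ p x) (hy : IsHomog σ q y) (ha : IsHomog σ m a) (b : L) :
    adT σ br α (p + q) (br x y) (map α α (a ⊗ₜ[K] b))
      = adT σ br α p (α x) (adT σ br α q y (a ⊗ₜ[K] b))
        - eps K p q • adT σ br α q (α y) (adT σ br α p x (a ⊗ₜ[K] b)) := by
  have hσbr := h.2.1
  have hσα := h.2.2.1
  rw [map_tmul, adT_tmul_of_isHomog _ _ _ (ha.map hσα), adT_tmul_of_isHomog _ _ _ ha,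
    adT_tmul_of_isHomog _ _ _ ha, map_add, map_smul, map_add, map_smul,
    adT_tmul_of_isHomog _ _ _ (hy.br hσbr ha), adT_tmul_of_isHomog _ _ _ (ha.map hσα),
    adT_tmul_of_isHomog _ _ _ (hx.br hσbr ha), adT_tmul_of_isHomog _ _ _ (ha.map hσα),
    h.br_br_alpha hx hy a, h.br_br_alpha hx hy b, hmult y a, hmult x a, hmult y b, hmult x b,
    eps_add_left, eps_add_right, eps_add_right, eps_comm K q p]
  simp only [tmul_sub, sub_tmul, tmul_smul, ← smul_tmul']
  -- the two cross terms `[α x, α a] ⊗ [α y, α b]` cancel because `ε(p,q)² = 1`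
  linear_combination (norm := module)
    eps_mul_self K p q • (eps K q m • (br (α x) (α a) ⊗ₜ[K] br (α y) (α b)))

lemma IsHomLieSuperalgebra.adT_br_map (h : IsHomLieSuperalgebra σ br α)
    (hmult : IsMultiplicative br α) {p q : ZMod 2} {x y : L}
    (hx : IsHomog σ p x) (hy : IsHomog σ q y) (t : L ⊗[K] L) :
    adT σ br α (p + q) (br x y) (map α α t)
      = adT σ br α p (α x) (adT σ br α q y t)
        - eps K p q • adT σ br α q (α y) (adT σ br α p x t) := by
  induction t using TensorProduct.induction_on with
  | zero => simp
  | tmul a b =>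
    obtain ⟨a₀, a₁, ha₀, ha₁, rfl⟩ := exists_isHomog_add h.1 a
    simp only [add_tmul, map_add, h.adT_br_map_tmul hmult hx hy ha₀,
      h.adT_br_map_tmul hmult hx hy ha₁]
    module
  | add u v hu hv =>
    simp only [map_add, hu, hv]
    module

end AdjointAction

theorem adjoint_of_r_is_cocycle_general
    {K : Type*} [Field K] [CharZero K] {L : Type*} [AddCommGroup L] [Module K L]
    (σ : L →ₗ[K] L) (br : L →ₗ[K] L →ₗ[K] L) (α : L →ₗ[K] L)
    (halg : IsHomLieSuperalgebra σ br α) (hmult : IsMultiplicative br α)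
    (r : L ⊗[K] L)
    (hrα : TensorProduct.map α α r = r) :
    ∀ (p q : ZMod 2) (x y : L), IsHomog σ p x → IsHomog σ q y →
      adT σ br α (p + q) (br x y) r
        = adT σ br α p (α x) (adT σ br α q y r)
          - eps K p q • adT σ br α q (α y) (adT σ br α p x r) := by
  intro p q x y hx hy
  simpa only [hrα] using halg.adT_br_map hmult hx hy r

/-- For a multiplicative Hom-Lie superalgebra and an even
`α^{⊗2}`-invariant element `r`, the map `Δ = ad(r)` satisfies the 1-cocycle
(compatibility) condition. -/
theorem adjoint_of_r_is_cocycle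
    {K : Type*} [Field K] [CharZero K] {L : Type*} [AddCommGroup L] [Module K L]
    (σ : L →ₗ[K] L) (br : L →ₗ[K] L →ₗ[K] L) (α : L →ₗ[K] L)
    (halg : IsHomLieSuperalgebra σ br α) (hmult : IsMultiplicative br α)
    (r : L ⊗[K] L)
    (hrα : TensorProduct.map α α r = r)
    -- `r` is even, i.e. `|r₁| = |r₂|` for each summand:
    (hreven : TensorProduct.map σ σ r = r) :
    ∀ (p q : ZMod 2) (x y : L), IsHomog σ p x → IsHomog σ q y →
      adT σ br α (p + q) (br x y) r
        = adT σ br α p (α x) (adT σ br α q y r)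
          - eps K p q • adT σ br α q (α y) (adT σ br α p x r) :=
  adjoint_of_r_is_cocycle_general σ br α halg hmult r hrα
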